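/- For all t ∈ (0, π/2): (8/π)·1/(4 - cos t) < sin t / t < 3/(4 - cos t). -/

import Mathlib

/-!
Both bounds are statements about `h x = sin x * (4 - cos x)`. Since
`h' = 1 + 4 cos - 2 cos² = 3 - 2 (1 - cos)²`, the function `3 x - h x` increases, giving the
upper bound. Since `h'' = 4 sin (cos - 1) < 0` on `(0, π)`, `h` is strictly concave there, so on
`(0, π/2)` it lies above its chord from `h 0 = 0` to `h (π/2) = 4`, giving the lower bound.
-/

open Real Set

namespace Real

lemma hasDerivAt_sin_mul_four_sub_cos (x : ℝ) :
    HasDerivAt (fun y => sin y * (4 - cos y)) (1 + 4 * cos x - 2 * cos x ^ 2) x := by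
  refine ((hasDerivAt_sin x).mul ((hasDerivAt_cos x).const_sub 4)).congr_deriv ?_
  nlinarith [sin_sq_add_cos_sq x]

lemma deriv_sin_mul_four_sub_cos :
    deriv (fun y => sin y * (4 - cos y)) = fun x => 1 + 4 * cos x - 2 * cos x ^ 2 :=
  funext fun x => (hasDerivAt_sin_mul_four_sub_cos x).deriv

lemma hasDerivAt_one_add_four_mul_cos_sub_two_mul_cos_sq (x : ℝ) :
    HasDerivAt (fun y => 1 + 4 * cos y - 2 * cos y ^ 2) (4 * sin x * (cos x - 1)) x := by
  refine ((((hasDerivAt_cos x).const_mul 4).const_add 1).sub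
    (((hasDerivAt_cos x).pow 2).const_mul 2)).congr_deriv ?_
  norm_num
  ring

lemma strictConcaveOn_sin_mul_four_sub_cos :
    StrictConcaveOn ℝ (Icc 0 π) (fun x => sin x * (4 - cos x)) := by
  refine strictConcaveOn_of_deriv2_neg (convex_Icc 0 π) (by fun_prop) fun x hx => ?_
  rw [interior_Icc] at hx
  have hsin : 0 < sin x := sin_pos_of_pos_of_lt_pi hx.1 hx.2
  have hcos : cos x < 1 := by
    simpa using strictAntiOn_cos ⟨le_rfl, pi_pos.le⟩ (Ioo_subset_Icc_self hx) hx.1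
  rw [Function.iterate_succ_apply, Function.iterate_one, deriv_sin_mul_four_sub_cos,
    (hasDerivAt_one_add_four_mul_cos_sub_two_mul_cos_sq x).deriv]
  nlinarith

lemma mul_lt_sin_mul_four_sub_cos {x : ℝ} (hx : 0 < x) (hx' : x < π / 2) :
    8 / π * x < sin x * (4 - cos x) := by
  have hb : 0 < 2 / π * x := by positivity
  have hb' : 2 / π * x < 1 := by
    rwa [div_mul_eq_mul_div, div_lt_one pi_pos, ← lt_div_iff₀' two_pos]
  have key := strictConcaveOn_sin_mul_four_sub_cos.2 ⟨le_rfl, pi_pos.le⟩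
    ⟨pi_div_two_pos.le, half_le_self pi_pos.le⟩ pi_div_two_pos.ne (sub_pos.2 hb') hb (by ring)
  have hpoint : (1 - 2 / π * x) * 0 + 2 / π * x * (π / 2) = x := by
    field_simp; ring
  simp only [smul_eq_mul, hpoint, sin_zero, cos_zero, sin_pi_div_two, cos_pi_div_two] at key
  calc 8 / π * x = (1 - 2 / π * x) * (0 * (4 - 1)) + 2 / π * x * (1 * (4 - 0)) := by ring
    _ < sin x * (4 - cos x) := key

lemma strictMonoOn_mul_sub_sin_mul_four_sub_cos :
    StrictMonoOn (fun x => 3 * x - sin x * (4 - cos x)) (Icc 0 (2 * π)) := by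
  refine strictMonoOn_of_deriv_pos (convex_Icc 0 (2 * π)) (by fun_prop) fun x hx => ?_
  rw [interior_Icc] at hx
  have hcos : cos x ≠ 1 := fun h =>
    hx.1.ne' ((cos_eq_one_iff_of_lt_of_lt (by linarith [hx.1, pi_pos]) hx.2).1 h)
  have hderiv : HasDerivAt (fun x => 3 * x - sin x * (4 - cos x))
      (3 * 1 - (1 + 4 * cos x - 2 * cos x ^ 2)) x :=
    ((hasDerivAt_id' x).const_mul 3).sub (hasDerivAt_sin_mul_four_sub_cos x)
  rw [hderiv.deriv]
  have hsq : 0 < (1 - cos x) ^ 2 := sq_pos_of_ne_zero (sub_ne_zero.2 hcos.symm)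
  linarith

lemma sin_mul_four_sub_cos_lt {x : ℝ} (hx : 0 < x) : sin x * (4 - cos x) < 3 * x := by
  rcases le_or_gt x (2 * π) with hx' | hx'
  · simpa using
      strictMonoOn_mul_sub_sin_mul_four_sub_cos ⟨le_rfl, two_pi_pos.le⟩ ⟨hx.le, hx'⟩ hx
  -- beyond `2π` the crude bound `sin x * (4 - cos x) ≤ 5 < 6π` suffices
  · nlinarith [neg_one_le_sin x, sin_le_one x, neg_one_le_cos x, cos_le_one x, pi_gt_three]

end Real

theorem stmt8 (t : ℝ) (ht : t ∈ Set.Ioo 0 (Real.pi/2)) :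
    (8/Real.pi) * (1/(4 - Real.cos t)) < Real.sin t / t ∧
    Real.sin t / t < 3/(4 - Real.cos t) := by
  obtain ⟨ht0, ht1⟩ := ht
  have hden : 0 < 4 - cos t := by linarith [cos_le_one t]
  constructor
  · rw [mul_one_div, div_lt_div_iff₀ hden ht0]
    linarith [mul_lt_sin_mul_four_sub_cos ht0 ht1]
  · rw [div_lt_div_iff₀ ht0 hden]
    linarith [sin_mul_four_sub_cos_lt ht0]
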